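/- Let n ≥ 1 and 0 ≤ t < 1. Define F(y) := ‖y‖ + t·yₙ on ℝⁿ (Euclidean norm plus t times the last coordinate), ρ₊(x) := ‖x‖ + t·xₙ and ρ₋(x) := ‖x‖ − t·xₙ. Then for every x ≠ 0: (i) sup over y ≠ 0 of (⟨x,y⟩/‖x‖ + t·yₙ)/(‖y‖ + t·yₙ) = 1, i.e. the dual norm of the Fréchet derivative of ρ₊ at x equals 1; and (ii) sup over y ≠ 0 of (−⟨x,y⟩/‖x‖ + t·yₙ)/(‖y‖ + t·yₙ) = 1, i.e. the dual norm of the Fréchet derivative of −ρ₋ at x equals 1. -/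
import Mathlib

open scoped RealInnerProductSpace

lemma coord_abs_le_norm (n : ℕ) (y : EuclideanSpace ℝ (Fin n)) (i : Fin n) :
    |y i| ≤ ‖y‖ := by
  have h := abs_real_inner_le_norm (EuclideanSpace.single i (1:ℝ)) y
  simpa [EuclideanSpace.inner_single_left] using h

lemma denom_pos (n : ℕ) (t : ℝ) (ht0 : 0 ≤ t) (ht1 : t < 1) (i : Fin n)
    (y : EuclideanSpace ℝ (Fin n)) (hy : y ≠ 0) : 0 < ‖y‖ + t * y i := by
  have hy' : 0 < ‖y‖ := norm_pos_iff.mpr hy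
  have h1 : |y i| ≤ ‖y‖ := coord_abs_le_norm n y i
  nlinarith [abs_le.mp h1]

lemma ratio_le_one (n : ℕ) (t : ℝ) (ht0 : 0 ≤ t) (ht1 : t < 1) (i : Fin n)
    (x : EuclideanSpace ℝ (Fin n)) (hx : x ≠ 0)
    (y : EuclideanSpace ℝ (Fin n)) (hy : y ≠ 0) :
    (⟪x, y⟫ / ‖x‖ + t * y i) / (‖y‖ + t * y i) ≤ 1 := by
  have hx' : 0 < ‖x‖ := norm_pos_iff.mpr hx
  have hd := denom_pos n t ht0 ht1 i y hy
  rw [div_le_one hd]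
  have h := real_inner_le_norm x y
  have : ⟪x, y⟫ / ‖x‖ ≤ ‖y‖ := by
    rw [div_le_iff₀ hx']; nlinarith
  linarith

lemma sup_eq_one (n : ℕ) (t : ℝ) (ht0 : 0 ≤ t) (ht1 : t < 1) (i : Fin n)
    (x : EuclideanSpace ℝ (Fin n)) (hx : x ≠ 0) :
    (⨆ y : {y : EuclideanSpace ℝ (Fin n) // y ≠ 0},
      (⟪x, (y : EuclideanSpace ℝ (Fin n))⟫ / ‖x‖ + t * (y : EuclideanSpace ℝ (Fin n)) i) /
        (‖(y : EuclideanSpace ℝ (Fin n))‖ + t * (y : EuclideanSpace ℝ (Fin n)) i)) = 1 := by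
  have hx' : 0 < ‖x‖ := norm_pos_iff.mpr hx
  have : Nonempty {y : EuclideanSpace ℝ (Fin n) // y ≠ 0} := ⟨⟨x, hx⟩⟩
  apply le_antisymm
  · exact ciSup_le fun ⟨y, hy⟩ => ratio_le_one n t ht0 ht1 i x hx y hy
  · have hb : BddAbove (Set.range fun y : {y : EuclideanSpace ℝ (Fin n) // y ≠ 0} =>
        (⟪x, (y : EuclideanSpace ℝ (Fin n))⟫ / ‖x‖ + t * (y : EuclideanSpace ℝ (Fin n)) i) /
          (‖(y : EuclideanSpace ℝ (Fin n))‖ + t * (y : EuclideanSpace ℝ (Fin n)) i)) := by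
      refine ⟨1, ?_⟩
      rintro r ⟨⟨y, hy⟩, rfl⟩
      exact ratio_le_one n t ht0 ht1 i x hx y hy
    refine le_ciSup_of_le hb ⟨x, hx⟩ ?_
    have hinner : ⟪x, x⟫ / ‖x‖ = ‖x‖ := by
      rw [real_inner_self_eq_norm_mul_norm]
      field_simp
    have hd := denom_pos n t ht0 ht1 i x hx
    rw [hinner, div_self (ne_of_gt hd)]

/-- **Formula (5.2)** (eikonal equations): for the Randers norm `F(y) = ‖y‖ + t yₙ` on `ℝⁿ`
with dual norm `F*(ξ) = sup_{y ≠ 0} ⟨ξ,y⟩/F(y)`, and `ρ₊(x) = ‖x‖ + t xₙ`,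
`ρ₋(x) = ‖x‖ − t xₙ`, one has `F*(dρ₊|ₓ) = 1` and `F*(d(−ρ₋)|ₓ) = 1` for every `x ≠ 0`,
where `dρ₊|ₓ(y) = ⟨x,y⟩/‖x‖ + t yₙ` and `d(−ρ₋)|ₓ(y) = −⟨x,y⟩/‖x‖ + t yₙ`. -/
theorem stmt_6 (n : ℕ) (hn : 1 ≤ n) (t : ℝ) (ht0 : 0 ≤ t) (ht1 : t < 1)
    (x : EuclideanSpace ℝ (Fin n)) (hx : x ≠ 0) :
    (⨆ y : {y : EuclideanSpace ℝ (Fin n) // y ≠ 0},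
      (⟪x, (y : EuclideanSpace ℝ (Fin n))⟫ / ‖x‖
          + t * (y : EuclideanSpace ℝ (Fin n)) ⟨n - 1, by omega⟩) /
        (‖(y : EuclideanSpace ℝ (Fin n))‖
          + t * (y : EuclideanSpace ℝ (Fin n)) ⟨n - 1, by omega⟩)) = 1 ∧
    (⨆ y : {y : EuclideanSpace ℝ (Fin n) // y ≠ 0},
      (-⟪x, (y : EuclideanSpace ℝ (Fin n))⟫ / ‖x‖
          + t * (y : EuclideanSpace ℝ (Fin n)) ⟨n - 1, by omega⟩) /
        (‖(y : EuclideanSpace ℝ (Fin n))‖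
          + t * (y : EuclideanSpace ℝ (Fin n)) ⟨n - 1, by omega⟩)) = 1 := by
  constructor
  · exact sup_eq_one n t ht0 ht1 ⟨n - 1, by omega⟩ x hx
  · have hnx : (-x : EuclideanSpace ℝ (Fin n)) ≠ 0 := neg_ne_zero.mpr hx
    have := sup_eq_one n t ht0 ht1 ⟨n - 1, by omega⟩ (-x) hnx
    simp only [inner_neg_left, norm_neg, neg_div] at this
    convert this using 3 with y
    rw [neg_div]
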